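/- Let V be a nonzero finite-dimensional complex vector space and let W, W' be complex vector spaces. Regard Hom_ℂ(V, W) and Hom_ℂ(V, W') as right End_ℂ(V)-modules via precomposition (β · a := β ∘ a). Then every homomorphism of right End_ℂ(V)-modules φ : Hom_ℂ(V, W) → Hom_ℂ(V, W') is of the form φ(β) = f ∘ β for a unique ℂ-linear map f : W → W'. Equivalently, postcomposition gives a ℂ-linear bijection from Hom_ℂ(W, W') onto the space of right End_ℂ(V)-module homomorphisms from Hom_ℂ(V, W) to Hom_ℂ(V, W'). -/

import Mathlib

/-!
Pick `v₀ ≠ 0` and a functional `g` with `g v₀ = 1`. The rank-one endomorphisms `g.smulRight v`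
let precomposition move any value `β v` to the value at `v₀` of the map `g.smulRight (β v)`, so
compatibility with precomposition forces `φ β v = f (β v)` for `f w := φ (g.smulRight w) v₀`.
Uniqueness holds because every `w` is the value at `v₀` of `g.smulRight w`.
-/

namespace LinearMap

variable {R M N N' : Type*} [CommSemiring R] [AddCommMonoid M] [Module R M]
  [AddCommMonoid N] [Module R N] [AddCommMonoid N'] [Module R N']

theorem comp_smulRight (β : M →ₗ[R] N) (g : Module.Dual R M) (x : M) :
    β ∘ₗ g.smulRight x = g.smulRight (β x) := by
  ext; simp

theorem smulRight_apply_of_apply_eq_one {g : Module.Dual R M} {v₀ : M} (hg : g v₀ = 1) (x : N) :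
    g.smulRight x v₀ = x := by
  simp [hg]

variable {g : Module.Dual R M} {v₀ : M} {φ : (M →ₗ[R] N) →ₗ[R] (M →ₗ[R] N')}

theorem apply_eq_apply_smulRight_of_apply_eq_one (hg : g v₀ = 1)
    (hφ : ∀ (a : Module.End R M) (β : M →ₗ[R] N), φ (β ∘ₗ a) = φ β ∘ₗ a)
    (β : M →ₗ[R] N) (v : M) : φ β v = φ (g.smulRight (β v)) v₀ := by
  rw [← comp_smulRight, hφ, comp_apply, smulRight_apply_of_apply_eq_one hg]

theorem existsUnique_eq_comp_of_apply_eq_one (hg : g v₀ = 1)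
    (hφ : ∀ (a : Module.End R M) (β : M →ₗ[R] N), φ (β ∘ₗ a) = φ β ∘ₗ a) :
    ∃! f : N →ₗ[R] N', ∀ β : M →ₗ[R] N, φ β = f ∘ₗ β := by
  refine ⟨applyₗ v₀ ∘ₗ φ ∘ₗ smulRightₗ g, fun β ↦ ?_, fun f hf ↦ ?_⟩
  · ext v
    exact apply_eq_apply_smulRight_of_apply_eq_one hg hφ β v
  · ext w
    simp [hf, hg]

end LinearMap

theorem rightEndModuleHom_eq_postcomp_general
    (V : Type*) [AddCommGroup V] [Module ℂ V] [Nontrivial V]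
    (W W' : Type*) [AddCommGroup W] [Module ℂ W] [AddCommGroup W'] [Module ℂ W']
    (φ : (V →ₗ[ℂ] W) →ₗ[ℂ] (V →ₗ[ℂ] W'))
    (hφ : ∀ (a : Module.End ℂ V) (β : V →ₗ[ℂ] W), φ (β ∘ₗ a) = (φ β) ∘ₗ a) :
    ∃! f : W →ₗ[ℂ] W', ∀ β : V →ₗ[ℂ] W, φ β = f ∘ₗ β := by
  obtain ⟨v₀, hv₀⟩ := exists_ne (0 : V)
  obtain ⟨g, hg⟩ := Module.Projective.exists_dual_eq_one ℂ hv₀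
  exact LinearMap.existsUnique_eq_comp_of_apply_eq_one hg hφ

/-- Let `V` be a nonzero finite-dimensional complex vector space and `W`, `W'` complex
vector spaces.  Every homomorphism of right `End_ℂ(V)`-modules
`φ : Hom_ℂ(V, W) → Hom_ℂ(V, W')` (ℂ-linear and compatible with precomposition,
i.e. `φ (β ∘ a) = φ β ∘ a` for all `a : End_ℂ(V)`) is postcomposition with a unique
ℂ-linear map `f : W → W'`. -/
theorem rightEndModuleHom_eq_postcomp
    (V : Type*) [AddCommGroup V] [Module ℂ V] [FiniteDimensional ℂ V] [Nontrivial V]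
    (W W' : Type*) [AddCommGroup W] [Module ℂ W] [AddCommGroup W'] [Module ℂ W']
    (φ : (V →ₗ[ℂ] W) →ₗ[ℂ] (V →ₗ[ℂ] W'))
    (hφ : ∀ (a : Module.End ℂ V) (β : V →ₗ[ℂ] W), φ (β ∘ₗ a) = (φ β) ∘ₗ a) :
    ∃! f : W →ₗ[ℂ] W', ∀ β : V →ₗ[ℂ] W, φ β = f ∘ₗ β :=
  rightEndModuleHom_eq_postcomp_general V W W' φ hφ
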